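/- arXiv:1305.0646 — 6 statements merged into one kernel-verified Lean document; each statement's English description precedes it below -/
import Mathlib

section
/- For the trapezoidal rule symbol δ(ξ) = 2(1-ξ)/(1+ξ), the convolution quadrature basis functions are φ_j(t) = (-1)^j (ℓ_j(4t) - ℓ_{j-1}(4t)), where ℓ_j(x) = e^{-x/2} L_j(x) is the j-th Laguerre function and L_{-1} ≡ 0; i.e., Σ_{j≥0} φ_j(t) ξ^j = e^{-2(1-ξ)t/(1+ξ)} for |ξ| < 1. -/
/-!
Multiplying a generating function by `1 - z` takes first differences of its coefficients, so
with `z = -ξ` the Laguerre generating function gives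
`Σ (-1)^j (L_j(x) - L_{j-1}(x)) ξ^j = e^{xξ/(1+ξ)}`. At `x = 4t` the factor `e^{-2t}` turns the
exponent into `-2t + 4tξ/(1+ξ) = -2(1-ξ)t/(1+ξ)`, which is `-δ(ξ) t`.
-/

section GeneratingFunction

variable {R : Type*} [CommRing R] [TopologicalSpace R] [IsTopologicalRing R]

theorem hasSum_shift_mul_pow {a : ℤ → R} {z S : R} (ha : a (-1) = 0)
    (h : HasSum (fun n : ℕ => a n * z ^ n) S) :
    HasSum (fun n : ℕ => a ((n : ℤ) - 1) * z ^ n) (z * S) := by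
  have hz : HasSum (fun n : ℕ => a n * z ^ (n + 1)) (z * S) := by
    simpa only [pow_succ', mul_left_comm] using h.mul_left z
  refine (hasSum_nat_add_iff' 1).mp ?_
  simpa [ha] using hz

theorem hasSum_sub_shift_mul_pow {a : ℤ → R} {z S : R} (ha : a (-1) = 0)
    (h : HasSum (fun n : ℕ => a n * z ^ n) S) :
    HasSum (fun n : ℕ => (a n - a ((n : ℤ) - 1)) * z ^ n) ((1 - z) * S) := by
  simpa [sub_mul] using h.sub (hasSum_shift_mul_pow ha h)

end GeneratingFunction

theorem exp_trapezoidal_symbol (t ξ : ℝ) (hξ : 1 + ξ ≠ 0) :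
    Real.exp (-(4 * t) / 2) * ((1 - -ξ) * ((1 - -ξ)⁻¹ * Real.exp (-(4 * t) * -ξ / (1 - -ξ)))) =
      Real.exp (-2 * (1 - ξ) * t / (1 + ξ)) := by
  rw [sub_neg_eq_add, mul_inv_cancel_left₀ hξ, ← Real.exp_add]
  congr 1
  rw [div_add_div _ _ two_ne_zero hξ, div_eq_div_iff (mul_ne_zero two_ne_zero hξ) hξ]
  ring

/-- For the trapezoidal rule symbol `δ(ξ) = 2(1-ξ)/(1+ξ)`, the CQ basis functions are
`φ_j(t) = (-1)^j (ℓ_j(4t) - ℓ_{j-1}(4t))` where `ℓ_j(x) = e^{-x/2} L_j(x)` and `L_{-1} ≡ 0`;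
i.e. `Σ_{j≥0} φ_j(t) ξ^j = e^{-2(1-ξ)t/(1+ξ)}` for `|ξ| < 1`. -/
theorem stmt_5 (L : ℤ → ℝ → ℝ)
    (hneg : ∀ j : ℤ, j < 0 → ∀ x : ℝ, L j x = 0)
    (hgen : ∀ x z : ℝ, |z| < 1 →
      HasSum (fun j : ℕ => L (j : ℤ) x * z ^ j) ((1 - z)⁻¹ * Real.exp (-x * z / (1 - z))))
    (t : ℝ) (ξ : ℝ) (hξ : |ξ| < 1) :
    HasSum (fun j : ℕ =>
        ((-1 : ℝ) ^ j *
          (Real.exp (-(4 * t) / 2) * L (j : ℤ) (4 * t) -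
            Real.exp (-(4 * t) / 2) * L ((j : ℤ) - 1) (4 * t))) * ξ ^ j)
      (Real.exp (-2 * (1 - ξ) * t / (1 + ξ))) := by
  have hξ₁ : 1 + ξ ≠ 0 := by linarith [neg_abs_le ξ]
  have hdiff := (hasSum_sub_shift_mul_pow (a := fun j => L j (4 * t))
    (hneg (-1) (by norm_num) (4 * t)) (hgen (4 * t) (-ξ) (by rwa [abs_neg]))).mul_left
    (Real.exp (-(4 * t) / 2))
  rw [exp_trapezoidal_symbol t ξ hξ₁] at hdiff
  refine hdiff.congr_fun fun j => ?_
  rw [neg_pow]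
  ring
end

section
/- The uniform B-splines satisfy the linear reproduction identity Σ_{j∈ℤ} (j + (m+1)/2) · b^m(τ - j) = τ for all τ ∈ ℝ and every m ≥ 1. -/
/-- The uniform B-spline of degree `m` on knots `0, 1, …, m+1`. -/
noncomputable def bspline : ℕ → ℝ → ℝ
  | 0, τ => if 0 ≤ τ ∧ τ < 1 then 1 else 0
  | m + 1, τ =>
      (τ / (m + 1)) * bspline m τ + (((m : ℝ) + 2 - τ) / (m + 1)) * bspline m (τ - 1)

/-!
Everything reduces to the two-scale recurrence read off the definition: pairing `b^{m+1}(τ - ·)`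
with coefficients `c` equals pairing `b^m(τ - ·)` with
`k ↦ (c k (τ - k) + c (k - 1) (m + 1 - τ + k)) / (m + 1)` (an index shift in the second term).
For `c = 1` this is again `1`, giving the partition of unity `Σ b^m(τ - j) = 1`; for
`c j = j + (m + 2)/2` it is `m/(m+1) · (k + (m+1)/2) + τ/(m+1)`, so the linear sums `S_m` satisfy
`S_{m+1} = m/(m+1) · S_m + τ/(m+1)`, whose fixed point is `τ` (and `S_1 = τ` whatever `S_0` is).
-/

theorem bspline_eq_zero {m : ℕ} {t : ℝ} (ht : t ∉ Set.Ico 0 ((m : ℝ) + 1)) :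
    bspline m t = 0 := by
  rw [Set.mem_Ico, not_and_or, not_le, not_lt] at ht
  induction m generalizing t with
  | zero =>
    simp only [bspline, Nat.cast_zero, zero_add] at ht ⊢
    rw [if_neg]
    rintro ⟨h₀, h₁⟩
    rcases ht with ht | ht <;> linarith
  | succ m ih =>
    push_cast at ht
    have ht₀ : t < 0 ∨ (m : ℝ) + 1 ≤ t := by rcases ht with ht | ht <;> [left; right] <;> linarith
    have ht₁ : t - 1 < 0 ∨ (m : ℝ) + 1 ≤ t - 1 := by
      rcases ht with ht | ht <;> [left; right] <;> linarith
    simp only [bspline, ih ht₀, ih ht₁, mul_zero, add_zero]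

theorem summable_mul_bspline (m : ℕ) (c : ℤ → ℝ) (τ : ℝ) :
    Summable fun j : ℤ => c j * bspline m (τ - j) := by
  refine summable_of_ne_finset_zero (s := Finset.Icc (⌊τ⌋ - m) ⌊τ⌋) fun j hj => ?_
  suffices τ - j ∉ Set.Ico 0 ((m : ℝ) + 1) by rw [bspline_eq_zero this, mul_zero]
  rintro ⟨h₀, h₁⟩
  refine hj (Finset.mem_Icc.mpr ⟨?_, Int.le_floor.mpr (by linarith)⟩)
  have : ⌊τ⌋ < j + m + 1 := Int.floor_lt.mpr (by push_cast; linarith)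
  omega

theorem tsum_mul_bspline_succ (m : ℕ) (c : ℤ → ℝ) (τ : ℝ) :
    ∑' j : ℤ, c j * bspline (m + 1) (τ - j) =
      ∑' k : ℤ, ((c k * (τ - k) + c (k - 1) * ((m : ℝ) + 1 - τ + k)) / ((m : ℝ) + 1)) *
        bspline m (τ - k) := by
  set f : ℤ → ℝ := fun k => c k * (τ - k) / ((m : ℝ) + 1) * bspline m (τ - k)
  set g : ℤ → ℝ := fun k => c (k - 1) * ((m : ℝ) + 1 - τ + k) / ((m : ℝ) + 1) * bspline m (τ - k)
  have hf : Summable f := summable_mul_bspline m _ τ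
  have hg : Summable g := summable_mul_bspline m _ τ
  have hg_shift : Summable fun j : ℤ => g (j + 1) := (Equiv.addRight (1 : ℤ)).summable_iff.mpr hg
  have tsum_g_shift : ∑' j : ℤ, g (j + 1) = ∑' k : ℤ, g k := (Equiv.addRight (1 : ℤ)).tsum_eq g
  calc ∑' j : ℤ, c j * bspline (m + 1) (τ - j)
      = ∑' j : ℤ, (f j + g (j + 1)) := by
        refine tsum_congr fun j => ?_
        simp only [f, g, bspline, add_sub_cancel_right]
        push_cast
        rw [sub_sub]
        field_simp
        ring
    _ = ∑' k : ℤ, (f k + g k) := by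
        rw [hf.tsum_add hg_shift, tsum_g_shift, hf.tsum_add hg]
    _ = _ := tsum_congr fun k => by simp only [f, g]; ring

theorem tsum_bspline_sub_intCast (m : ℕ) (τ : ℝ) : ∑' j : ℤ, bspline m (τ - j) = 1 := by
  induction m with
  | zero =>
    rw [tsum_eq_single ⌊τ⌋]
    · simp [bspline, Int.fract_lt_one]
    · intro j hj
      simp only [bspline, ite_eq_right_iff, one_ne_zero, imp_false]
      rintro ⟨h₀, h₁⟩
      exact hj (Int.floor_eq_iff.mpr ⟨by linarith, by linarith⟩).symm
  | succ m ih =>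
    have hm : (m : ℝ) + 1 ≠ 0 := by positivity
    simpa [div_self hm, ih] using tsum_mul_bspline_succ m (fun _ => 1) τ

theorem tsum_linear_mul_bspline_succ (m : ℕ) (τ : ℝ) :
    ∑' j : ℤ, ((j : ℝ) + (((m + 1 : ℕ) : ℝ) + 1) / 2) * bspline (m + 1) (τ - j) =
      (m : ℝ) / ((m : ℝ) + 1) * ∑' j : ℤ, ((j : ℝ) + ((m : ℝ) + 1) / 2) * bspline m (τ - j) +
        τ / ((m : ℝ) + 1) := by
  set S := ∑' j : ℤ, ((j : ℝ) + ((m : ℝ) + 1) / 2) * bspline m (τ - j)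
  calc _ = ∑' k : ℤ, ((m : ℝ) / ((m : ℝ) + 1) * (((k : ℝ) + ((m : ℝ) + 1) / 2) * bspline m (τ - k))
          + τ / ((m : ℝ) + 1) * bspline m (τ - k)) := by
        rw [tsum_mul_bspline_succ]
        refine tsum_congr fun k => ?_
        push_cast
        field_simp
        ring
    _ = (m : ℝ) / ((m : ℝ) + 1) * S + τ / ((m : ℝ) + 1) * ∑' k : ℤ, bspline m (τ - k) := by
        have hb : Summable fun k : ℤ => bspline m (τ - k) := by
          simpa using summable_mul_bspline m 1 τ
        rw [((summable_mul_bspline m _ τ).mul_left _).tsum_add (hb.mul_left _), tsum_mul_left,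
          tsum_mul_left]
    _ = _ := by rw [tsum_bspline_sub_intCast, mul_one]

theorem tsum_linear_mul_bspline (m : ℕ) (hm : 1 ≤ m) (τ : ℝ) :
    ∑' j : ℤ, ((j : ℝ) + ((m : ℝ) + 1) / 2) * bspline m (τ - j) = τ := by
  induction m, hm using Nat.le_induction with
  | base => simpa using tsum_linear_mul_bspline_succ 0 τ
  | succ m _ ih =>
    rw [tsum_linear_mul_bspline_succ, ih]
    field_simp

/-- Linear reproduction: `Σ_{j∈ℤ} (j + (m+1)/2) b^m(τ - j) = τ` for all `τ` and `m ≥ 1`. -/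
theorem stmt_11 (m : ℕ) (hm : 1 ≤ m) (τ : ℝ) :
    HasSum (fun j : ℤ => ((j : ℝ) + ((m : ℝ) + 1) / 2) * bspline m (τ - (j : ℝ))) τ :=
  (summable_mul_bspline m _ τ).hasSum_iff.mpr (tsum_linear_mul_bspline m hm τ)
end

section
/- For the degree-m isogeometric B-spline scheme applied to the constant kernel K ≡ 1, the weights are q_j = h·(j+1)/(m+1) for 0 ≤ j ≤ m-1 and q_j = h for j ≥ m, and consequently the Z-transform of the weights equals Q_m(ξ) = h(1 - ξ^{m+1}) / ((m+1)(1-ξ)²) for |ξ| < 1. -/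
/-- Knots `t_j = jh` for `j ≥ 0`, with `m` repeated knots at `0` (here `t_j = 0` for `j ≤ 0`). -/
noncomputable def knot (h : ℝ) (j : ℤ) : ℝ := h * max (j : ℝ) 0

/-- Cox–de Boor recursion for the isogeometric B-splines on `[0,∞)` (with the convention
`0/0 = 0`, automatic since division by zero is zero in Lean). `isoBspline h m j` is the degree
`m` B-spline `b^m_j` on the knots `knot h`. -/
noncomputable def isoBspline (h : ℝ) : ℕ → ℤ → ℝ → ℝ
  | 0, j, t => if knot h j ≤ t ∧ t < knot h (j + 1) then 1 else 0
  | m + 1, j, t =>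
      ((t - knot h j) / (knot h (j + (m : ℤ) + 1) - knot h j)) * isoBspline h m j t +
        ((knot h (j + (m : ℤ) + 2) - t) / (knot h (j + (m : ℤ) + 2) - knot h (j + 1))) *
          isoBspline h m (j + 1) t

/-!
Integrating the Cox–de Boor recursion against `t^k` lowers the degree of the B-spline but raises
the power of `t`, so one proves by induction on `m` the moment formula
`∫ t^k b^m_j = (t_{j+m+1} - t_j) · k! m! / (k+m+1)! · h_k(t_j, …, t_{j+m+1})`, where `h_k` is
the complete homogeneous symmetric polynomial. The inductive step combines two recurrences of `h_k`
with the Beta identity `B(k+2, m+1) + B(k+1, m+2) = B(k+1, m+1)`; a degenerate span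
`t_j = t_{j+m+1}` (where the convention `x / 0 = 0` enters) only occurs when all its knots are `0`.
For `k = 0` this gives `q_j = h (min(j, m) + 1) / (m + 1)`, and `min(j, m) + 1` counts the
`i ≤ m` with `i ≤ j`, so `Q_m` is a sum of `m + 1` geometric tails `ξ^i / (1 - ξ)`.
-/

open MeasureTheory Set

section Knots

variable {h : ℝ}

lemma knot_of_nonpos {j : ℤ} (hj : j ≤ 0) : knot h j = 0 := by
  simp [knot, max_eq_right (show (j : ℝ) ≤ 0 by exact_mod_cast hj)]

lemma knot_of_nonneg {j : ℤ} (hj : 0 ≤ j) : knot h j = h * j := by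
  simp [knot, max_eq_left (show (0 : ℝ) ≤ j by exact_mod_cast hj)]

lemma knot_nonneg (hh : 0 ≤ h) (j : ℤ) : 0 ≤ knot h j :=
  mul_nonneg hh (le_max_right _ _)

lemma knot_mono (hh : 0 ≤ h) : Monotone (knot h) := fun _ _ hab =>
  mul_le_mul_of_nonneg_left (max_le_max (by exact_mod_cast hab) le_rfl) hh

lemma nonpos_of_knot_eq (hh : 0 < h) {a b : ℤ} (hab : a < b) (he : knot h a = knot h b) :
    b ≤ 0 := by
  by_contra! hb
  have hlt : max (a : ℝ) 0 < b := max_lt (by exact_mod_cast hab) (by exact_mod_cast hb)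
  have : knot h a < knot h b := by
    rw [knot_of_nonneg hb.le]
    exact mul_lt_mul_of_pos_left hlt hh
  exact this.ne he

lemma knot_eq_zero_of_knot_eq (hh : 0 < h) {a b i : ℤ} (hab : a < b)
    (he : knot h b - knot h a = 0) (hi : i ≤ b) : knot h i = 0 :=
  knot_of_nonpos (hi.trans (nonpos_of_knot_eq hh hab (sub_eq_zero.mp he).symm))

end Knots

/-- `completeHom t k n j` is the complete homogeneous symmetric polynomial of degree `k`
in `t j, …, t (j + n)`. -/
noncomputable def completeHom (t : ℤ → ℝ) : ℕ → ℕ → ℤ → ℝ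
  | 0, _, _ => 1
  | k + 1, 0, j => t j ^ (k + 1)
  | k + 1, n + 1, j => completeHom t (k + 1) n j + t (j + n + 1) * completeHom t k (n + 1) j
termination_by k n _ => (k, n)

section CompleteHom

variable (t : ℤ → ℝ)

@[simp]
lemma completeHom_zero_left (n : ℕ) (j : ℤ) : completeHom t 0 n j = 1 := by
  cases n <;> simp [completeHom]

lemma completeHom_succ_zero (k : ℕ) (j : ℤ) : completeHom t (k + 1) 0 j = t j ^ (k + 1) := by
  simp [completeHom]

lemma completeHom_succ_succ (k n : ℕ) {j i : ℤ} (hi : i = j + n + 1) :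
    completeHom t (k + 1) (n + 1) j
      = completeHom t (k + 1) n j + t i * completeHom t k (n + 1) j := by
  rw [completeHom, hi]

lemma completeHom_succ_one (k : ℕ) (j : ℤ) :
    completeHom t (k + 1) 1 j = t j ^ (k + 1) + t (j + 1) * completeHom t k 1 j := by
  rw [completeHom_succ_succ t k 0 (i := j + 1) (by simp), completeHom_succ_zero]

lemma sub_mul_completeHom_one (k : ℕ) (j : ℤ) :
    (t (j + 1) - t j) * completeHom t k 1 j = t (j + 1) ^ (k + 1) - t j ^ (k + 1) := by
  induction k with
  | zero => simp
  | succ k ih =>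
    rw [completeHom_succ_one]
    linear_combination t (j + 1) * ih

/-- The recursion of `completeHom` that peels off the first variable instead of the last. -/
lemma completeHom_succ_succ' (n : ℕ) : ∀ (k : ℕ) (j : ℤ),
    completeHom t (k + 1) (n + 1) j
      = completeHom t (k + 1) n (j + 1) + t j * completeHom t k (n + 1) j := by
  induction n with
  | zero =>
    intro k j
    rw [zero_add, completeHom_succ_one, completeHom_succ_zero]
    linear_combination sub_mul_completeHom_one t k j
  | succ n ihn =>
    intro k
    induction k with
    | zero =>
      intro j
      have L := completeHom_succ_succ t 0 (n + 1) (i := j + n + 2) (by push_cast; ring)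
      have R := completeHom_succ_succ t 0 n (j := j + 1) (i := j + n + 2) (by ring)
      have A := ihn 0 j
      simp only [completeHom_zero_left] at L R A ⊢
      linear_combination L + A - R
    | succ k ihk =>
      intro j
      have L := completeHom_succ_succ t (k + 1) (n + 1) (i := j + n + 2) (by push_cast; ring)
      have R := completeHom_succ_succ t (k + 1) n (j := j + 1) (i := j + n + 2) (by ring)
      have B := completeHom_succ_succ t k (n + 1) (i := j + n + 2) (by push_cast; ring)
      linear_combination L + ihn (k + 1) j - R - t j * B + t (j + n + 2) * ihk j

lemma completeHom_succ_eq_zero (k : ℕ) : ∀ (n : ℕ) (j : ℤ),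
    (∀ i, j ≤ i → i ≤ j + n → t i = 0) → completeHom t (k + 1) n j = 0 := by
  intro n
  induction n with
  | zero =>
    intro j hz
    simp [completeHom_succ_zero, hz j le_rfl (by simp)]
  | succ n ihn =>
    intro j hz
    rw [completeHom_succ_succ t k n rfl, ihn j (fun i h1 h2 => hz i h1 (by omega)),
      hz (j + n + 1) (by omega) (by push_cast; omega)]
    simp

lemma completeHom_shift_sub (k n : ℕ) (j : ℤ) :
    t (j + n + 2) * completeHom t k (n + 1) (j + 1) - t j * completeHom t k (n + 1) j
      = (t (j + n + 2) - t j) * completeHom t k (n + 2) j := by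
  cases k with
  | zero => simp only [completeHom_zero_left]; ring
  | succ k =>
    have B := completeHom_succ_succ t k (n + 1) (i := j + n + 2) (by push_cast; ring)
    linear_combination t j * B - t (j + n + 2) * completeHom_succ_succ' t (n + 1) k j

lemma completeHom_sub_shift (k n : ℕ) (j : ℤ) :
    completeHom t (k + 1) (n + 1) j - completeHom t (k + 1) (n + 1) (j + 1)
      = (t j - t (j + n + 2)) * completeHom t k (n + 2) j := by
  have B := completeHom_succ_succ t k (n + 1) (i := j + n + 2) (by push_cast; ring)
  linear_combination completeHom_succ_succ' t (n + 1) k j - B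

end CompleteHom

open Nat in
/-- `k! m! / (k + m + 1)!`, the value `B(k + 1, m + 1)` of the Beta function. -/
noncomputable def betaNat (k m : ℕ) : ℝ := (k ! * m ! : ℝ) / (k + m + 1)!

open Nat in
lemma betaNat_zero_right (k : ℕ) : betaNat k 0 = 1 / (k + 1) := by
  simp only [betaNat, factorial_zero, add_zero, factorial_succ]
  push_cast
  field_simp

open Nat in
lemma betaNat_zero_left (m : ℕ) : betaNat 0 m = 1 / (m + 1) := by
  simp only [betaNat, factorial_zero, zero_add, factorial_succ]
  push_cast
  field_simp

open Nat in
lemma betaNat_succ_left_add_betaNat_succ_right (k m : ℕ) :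
    betaNat (k + 1) m + betaNat k (m + 1) = betaNat k m := by
  simp only [betaNat, show k + 1 + m + 1 = k + m + 1 + 1 by ring,
    show k + (m + 1) + 1 = k + m + 1 + 1 by ring, factorial_succ]
  push_cast
  field_simp
  ring

lemma setIntegral_Ioi_zero_indicator_Ico_pow (k : ℕ) {a b : ℝ} (ha : 0 ≤ a) (hab : a ≤ b) :
    ∫ t in Ioi 0, (Ico a b).indicator (· ^ k) t = (b ^ (k + 1) - a ^ (k + 1)) / (k + 1) := by
  rw [← integral_Ici_eq_integral_Ioi, setIntegral_indicator measurableSet_Ico,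
    inter_eq_right.mpr (Ico_subset_Ici_self.trans (Ici_subset_Ici.mpr ha)),
    integral_Ico_eq_integral_Ioo, ← integral_Ioc_eq_integral_Ioo,
    ← intervalIntegral.integral_of_le hab, integral_pow]

section Moments

variable {h : ℝ}

lemma pow_mul_isoBspline_zero (k : ℕ) (j : ℤ) :
    (fun t => t ^ k * isoBspline h 0 j t)
      = (Ico (knot h j) (knot h (j + 1))).indicator (· ^ k) := by
  ext t
  by_cases ht : knot h j ≤ t ∧ t < knot h (j + 1) <;> simp [isoBspline, indicator, ht]

lemma pow_mul_isoBspline_succ (m k : ℕ) (j : ℤ) (t : ℝ) :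
    t ^ k * isoBspline h (m + 1) j t
      = (t ^ (k + 1) * isoBspline h m j t - knot h j * (t ^ k * isoBspline h m j t))
          / (knot h (j + m + 1) - knot h j)
        + (knot h (j + m + 2) * (t ^ k * isoBspline h m (j + 1) t)
            - t ^ (k + 1) * isoBspline h m (j + 1) t) / (knot h (j + m + 2) - knot h (j + 1)) := by
  rw [isoBspline]
  ring

lemma integrableOn_pow_mul_isoBspline (m : ℕ) : ∀ (k : ℕ) (j : ℤ),
    IntegrableOn (fun t => t ^ k * isoBspline h m j t) (Ioi 0) := by
  induction m with
  | zero =>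
    intro k j
    rw [pow_mul_isoBspline_zero]
    exact (((continuous_pow k).integrableOn_Icc.mono_set Ico_subset_Icc_self).integrable_indicator
      measurableSet_Ico).integrableOn
  | succ m ih =>
    intro k j
    simp_rw [pow_mul_isoBspline_succ]
    exact ((((ih (k + 1) j).sub ((ih k j).const_mul _)).div_const _)).add
      ((((ih k (j + 1)).const_mul _).sub (ih (k + 1) (j + 1))).div_const _)

noncomputable def isoBsplineMoment (h : ℝ) (k m : ℕ) (j : ℤ) : ℝ :=
  ∫ t in Ioi 0, t ^ k * isoBspline h m j t

lemma isoBsplineMoment_zero (hh : 0 ≤ h) (k : ℕ) (j : ℤ) :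
    isoBsplineMoment h k 0 j = (knot h (j + 1) ^ (k + 1) - knot h j ^ (k + 1)) / (k + 1) := by
  rw [isoBsplineMoment, pow_mul_isoBspline_zero,
    setIntegral_Ioi_zero_indicator_Ico_pow k (knot_nonneg hh j) (knot_mono hh (by omega))]

lemma isoBsplineMoment_succ (k m : ℕ) (j : ℤ) :
    isoBsplineMoment h k (m + 1) j
      = (isoBsplineMoment h (k + 1) m j - knot h j * isoBsplineMoment h k m j)
          / (knot h (j + m + 1) - knot h j)
        + (knot h (j + m + 2) * isoBsplineMoment h k m (j + 1)
            - isoBsplineMoment h (k + 1) m (j + 1))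
          / (knot h (j + m + 2) - knot h (j + 1)) := by
  have I := integrableOn_pow_mul_isoBspline (h := h) m
  simp_rw [isoBsplineMoment, pow_mul_isoBspline_succ]
  rw [integral_add ?first ?second, integral_div, integral_div, integral_sub (I (k + 1) j) ?_,
    integral_sub ?_ (I (k + 1) (j + 1)), integral_const_mul, integral_const_mul]
  case first => exact (((I (k + 1) j).sub ((I k j).const_mul _)).div_const _)
  case second => exact ((((I k (j + 1)).const_mul _).sub (I (k + 1) (j + 1))).div_const _)
  all_goals exact (I k _).const_mul _

theorem isoBsplineMoment_eq (hh : 0 < h) (m : ℕ) : ∀ (k : ℕ) (j : ℤ),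
    isoBsplineMoment h k m j
      = (knot h (j + m + 1) - knot h j) * (betaNat k m * completeHom (knot h) k (m + 1) j) := by
  induction m with
  | zero =>
    intro k j
    rw [isoBsplineMoment_zero hh.le, betaNat_zero_right, Nat.cast_zero, add_zero, mul_left_comm,
      zero_add, sub_mul_completeHom_one]
    ring
  | succ m ih =>
    intro k j
    have shift : j + 1 + (m : ℤ) + 1 = j + m + 2 := by ring
    have shift' : j + ((m + 1 : ℕ) : ℤ) + 1 = j + m + 2 := by push_cast; ring
    rw [isoBsplineMoment_succ, ih, ih, ih, ih, shift, shift', mul_left_comm (knot h j),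
      mul_left_comm (knot h (j + m + 2)), ← mul_sub, ← mul_sub, mul_div_cancel_left_of_imp,
      mul_div_cancel_left_of_imp]
    · linear_combination betaNat (k + 1) m * completeHom_sub_shift (knot h) k m j
        + betaNat k m * completeHom_shift_sub (knot h) k m j
        + (knot h j - knot h (j + m + 2)) * completeHom (knot h) k (m + 2) j
          * betaNat_succ_left_add_betaNat_succ_right k m
    · intro hΔ
      have hz : ∀ i : ℤ, i ≤ j + m + 2 → knot h i = 0 := fun _ =>
        knot_eq_zero_of_knot_eq hh (by omega) hΔ
      rw [completeHom_succ_eq_zero _ k (m + 1) (j + 1)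
        (fun i _ hi => hz i (by push_cast at hi; omega)), hz _ le_rfl]
      ring
    · intro hΔ
      have hz : ∀ i : ℤ, i ≤ j + m + 1 → knot h i = 0 := fun _ =>
        knot_eq_zero_of_knot_eq hh (by omega) hΔ
      rw [completeHom_succ_eq_zero _ k (m + 1) j
        (fun i _ hi => hz i (by push_cast at hi; omega)), hz j (by omega)]
      ring

lemma setIntegral_Ioi_zero_isoBspline (hh : 0 < h) (m : ℕ) (j : ℤ) :
    ∫ t in Ioi 0, isoBspline h m j t = (knot h (j + m + 1) - knot h j) / (m + 1) := by
  have := isoBsplineMoment_eq hh m 0 j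
  simp only [isoBsplineMoment, pow_zero, one_mul, betaNat_zero_left, completeHom_zero_left] at this
  rw [this]
  ring

lemma setIntegral_Ioi_zero_isoBspline_sub (hh : 0 < h) (m j : ℕ) :
    ∫ t in Ioi 0, isoBspline h m (j - m) t = h / (m + 1) * ((min j m : ℕ) + 1) := by
  rw [setIntegral_Ioi_zero_isoBspline hh, sub_add_cancel, knot_of_nonneg (by omega)]
  rcases le_total j m with hjm | hmj
  · rw [knot_of_nonpos (by omega), min_eq_left hjm]
    push_cast
    ring
  · rw [knot_of_nonneg (by omega), min_eq_right hmj]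
    push_cast
    ring

end Moments

lemma hasSum_ite_le_pow {ξ : ℝ} (hξ : |ξ| < 1) (i : ℕ) :
    HasSum (fun j => if i ≤ j then ξ ^ j else 0) (ξ ^ i / (1 - ξ)) := by
  have hshift := (hasSum_geometric_of_abs_lt_one hξ).mul_left (ξ ^ i)
  rw [← hasSum_nat_add_iff' i]
  simpa [Finset.sum_ite_of_false, pow_add, mul_comm, div_eq_mul_inv] using hshift

lemma min_add_one_eq_sum_ite (m j : ℕ) :
    ((min j m : ℕ) + 1 : ℝ)
      = ∑ i ∈ Finset.range (m + 1), if i ≤ j then (1 : ℝ) else 0 := by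
  have : (Finset.range (m + 1)).filter (· ≤ j) = Finset.range (min j m + 1) := by
    ext i
    simp only [Finset.mem_filter, Finset.mem_range]
    omega
  rw [Finset.sum_boole, this, Finset.card_range]
  push_cast
  rfl

lemma hasSum_min_add_one_mul_pow (m : ℕ) {ξ : ℝ} (hξ : |ξ| < 1) :
    HasSum (fun j : ℕ => ((min j m : ℕ) + 1 : ℝ) * ξ ^ j)
      ((1 - ξ ^ (m + 1)) / (1 - ξ) ^ 2) := by
  have hξ1 : ξ ≠ 1 := by rintro rfl; norm_num at hξ
  have hsum := hasSum_sum fun i (_ : i ∈ Finset.range (m + 1)) => hasSum_ite_le_pow hξ i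
  rw [← Finset.sum_div, geom_sum_eq hξ1] at hsum
  convert hsum using 1
  · ext j
    rw [min_add_one_eq_sum_ite, Finset.sum_mul]
    simp only [ite_mul, one_mul, zero_mul]
  · have : (1 : ℝ) - ξ ≠ 0 := sub_ne_zero.mpr hξ1.symm
    have : ξ - 1 ≠ 0 := sub_ne_zero.mpr hξ1
    field_simp
    ring

/-- For the degree-`m` isogeometric B-spline scheme with constant kernel `K ≡ 1`, the weights
are `q_j = h(j+1)/(m+1)` for `0 ≤ j ≤ m-1` and `q_j = h` for `j ≥ m`, and hence
`Q_m(ξ) = h(1 - ξ^{m+1})/((m+1)(1-ξ)²)` for `|ξ| < 1`. -/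
theorem stmt_12 (m : ℕ) (h : ℝ) (hh : 0 < h)
    (q : ℕ → ℝ)
    (hq : ∀ j : ℕ, q j = ∫ t in Set.Ioi (0 : ℝ), isoBspline h m ((j : ℤ) - (m : ℤ)) t) :
    (∀ j : ℕ, j < m → q j = h * ((j : ℝ) + 1) / ((m : ℝ) + 1)) ∧
    (∀ j : ℕ, m ≤ j → q j = h) ∧
    (∀ ξ : ℝ, |ξ| < 1 →
      HasSum (fun j : ℕ => q j * ξ ^ j)
        (h * (1 - ξ ^ (m + 1)) / (((m : ℝ) + 1) * (1 - ξ) ^ 2))) := by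
  have hq' : ∀ j, q j = h / (m + 1) * ((min j m : ℕ) + 1) := fun j =>
    (hq j).trans (setIntegral_Ioi_zero_isoBspline_sub hh m j)
  refine ⟨fun j hj => ?_, fun j hj => ?_, fun ξ hξ => ?_⟩
  · rw [hq', min_eq_left hj.le]
    ring
  · rw [hq', min_eq_right hj]
    field_simp
  · rw [mul_div_mul_comm]
    simpa only [hq', mul_assoc] using (hasSum_min_add_one_mul_pow m hξ).mul_left (h / (m + 1))
end

section
/- Let (p_n) be defined by p_0 = 1 and the Z-transform relation P(ξ)(1 + ξ - ξ^M g(r,ξ)) = 1 - ξ, where g(r,ξ) = ξ + (1 - r + rξ)² and M ≥ 3 is an integer. Then for M+2 ≤ n ≤ 2M-1 one has p_n = 2(-1)^n + (-1)^{n+M}(2 - 4r² - 8r(1-r)(n-M)); in particular, if r ∈ (0,1) then |p_n| grows linearly in n on this range, so the m = 1 B-spline scheme for the step-function kernel is unstable. -/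
/-!
Reading off coefficients of `(1 + ξ - ξ^M (a + bξ + cξ²)) P(ξ) = 1 - ξ` gives the recurrence
`p_n + p_{n-1} = a p_{n-M} + b p_{n-M-1} + c p_{n-M-2}` (terms with negative index omitted),
with the right-hand side `1 - ξ` contributing only at `n = 0, 1`. Below `n = M` it forces
`p_0 = 1` and `p_n = 2(-1)^n`, the coefficients of `(1 - ξ)/(1 + ξ)`. For `M + 2 ≤ n < 2M` all
three delayed terms are of that alternating form, so the deviation `p_n - 2(-1)^n` flips sign
and grows by `2(a - b + c)` at each step. For the step kernel `a = (1-r)²`, `b = 1 + 2r(1-r)`,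
`c = r²`, so `a - b + c = -4r(1-r)`.
-/

open Polynomial

variable {R : Type*} [CommRing R]

theorem coe_mul_mk_eq_of_sum_range_coeff_mul {A B : R[X]} {p : ℕ → R}
    (h : ∀ n, ∑ j ∈ Finset.range (n + 1), A.coeff j * p (n - j) = B.coeff n) :
    (A : PowerSeries R) * PowerSeries.mk p = B := by
  ext n
  rw [PowerSeries.coeff_mul, Finset.Nat.sum_antidiagonal_eq_sum_range_succ
    (fun i j => PowerSeries.coeff i (A : PowerSeries R) * PowerSeries.coeff j (PowerSeries.mk p))]
  simpa using h n

theorem recurrence_of_mul_mk_eq {M : ℕ} {a b c : R} {p : ℕ → R}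
    (h : ((1 + X - X ^ M * (C a + C b * X + C c * X ^ 2) : R[X]) : PowerSeries R) *
      PowerSeries.mk p = ((1 - X : R[X]) : PowerSeries R)) (n : ℕ) :
    p n + (if 1 ≤ n then p (n - 1) else 0) - (if M ≤ n then a * p (n - M) else 0)
      - (if M + 1 ≤ n then b * p (n - (M + 1)) else 0)
      - (if M + 2 ≤ n then c * p (n - (M + 2)) else 0)
      = (if n = 0 then 1 else 0) - (if n = 1 then 1 else 0) := by
  set P := PowerSeries.mk p
  have expand : ((1 + X - X ^ M * (C a + C b * X + C c * X ^ 2) : R[X]) : PowerSeries R) * P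
      = P + PowerSeries.X ^ 1 * P - PowerSeries.C a * (PowerSeries.X ^ M * P)
        - PowerSeries.C b * (PowerSeries.X ^ (M + 1) * P)
        - PowerSeries.C c * (PowerSeries.X ^ (M + 2) * P) := by
    push_cast
    ring
  have hn := congrArg (PowerSeries.coeff n) h
  rw [expand] at hn
  simp only [P, map_add, map_sub, PowerSeries.coeff_X_pow_mul', PowerSeries.coeff_C_mul,
    PowerSeries.coeff_mk, coe_sub, coe_one, coe_X, PowerSeries.coeff_one, PowerSeries.coeff_X,
    mul_ite, mul_zero] at hn
  simpa only [eq_comm (a := n)] using hn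

namespace StabilityRecurrence

variable {M : ℕ} {a b c : R} {p : ℕ → R}
  (hrec : ∀ n, p n + (if 1 ≤ n then p (n - 1) else 0) - (if M ≤ n then a * p (n - M) else 0)
      - (if M + 1 ≤ n then b * p (n - (M + 1)) else 0)
      - (if M + 2 ≤ n then c * p (n - (M + 2)) else 0)
      = (if n = 0 then 1 else 0) - (if n = 1 then 1 else 0))
include hrec

theorem apply_zero (hM : 0 < M) : p 0 = 1 := by
  have h := hrec 0
  split_ifs at h <;> first | contradiction | omega | linear_combination h

theorem apply_of_lt {n : ℕ} (hn : 1 ≤ n) (hnM : n < M) : p n = 2 * (-1) ^ n := by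
  induction n, hn using Nat.le_induction with
  | base =>
    have h := hrec 1
    split_ifs at h <;> first | contradiction | omega | skip
    linear_combination h - apply_zero hrec (by omega)
  | succ n hn ih =>
    have h := hrec (n + 1)
    split_ifs at h <;> first | contradiction | omega | skip
    rw [Nat.add_sub_cancel] at h
    linear_combination h - ih (by omega)

theorem apply_self (hM : 2 ≤ M) : p M = 2 * (-1) ^ M + a := by
  have h := hrec M
  split_ifs at h <;> first | contradiction | omega | skip
  obtain ⟨m, rfl⟩ : ∃ m, M = m + 1 := ⟨M - 1, by omega⟩
  rw [Nat.add_sub_cancel, Nat.sub_self, apply_zero hrec (by omega),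
    apply_of_lt hrec (n := m) (by omega) (by omega)] at h
  linear_combination h

theorem apply_self_add_one (hM : 2 ≤ M) : p (M + 1) = 2 * (-1) ^ (M + 1) + (b - 3 * a) := by
  have h := hrec (M + 1)
  split_ifs at h <;> first | contradiction | omega | skip
  rw [Nat.add_sub_cancel, Nat.add_sub_cancel_left, Nat.sub_self, apply_zero hrec (by omega),
    apply_of_lt hrec (n := 1) le_rfl (by omega), apply_self hrec hM] at h
  linear_combination h

theorem apply_add {k : ℕ} (hk : 2 ≤ k) (hkM : k < M) :
    p (M + k) = 2 * (-1) ^ (M + k) + (-1) ^ k * (a + b - 3 * c + 2 * (a - b + c) * k) := by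
  induction k, hk using Nat.le_induction with
  | base =>
    have h := hrec (M + 2)
    split_ifs at h <;> first | contradiction | omega | skip
    rw [show M + 2 - 1 = M + 1 by omega, Nat.add_sub_cancel_left,
      show M + 2 - (M + 1) = 1 by omega, Nat.sub_self, apply_zero hrec (by omega),
      apply_of_lt hrec (n := 1) le_rfl (by omega), apply_of_lt hrec (n := 2) one_le_two hkM,
      apply_self_add_one hrec (by omega)] at h
    push_cast
    linear_combination h
  | succ k hk ih =>
    obtain ⟨j, rfl⟩ : ∃ j, k = j + 1 := ⟨k - 1, by omega⟩
    have h := hrec (M + (j + 2))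
    split_ifs at h <;> first | contradiction | omega | skip
    rw [show M + (j + 2) - 1 = M + (j + 1) by omega, Nat.add_sub_cancel_left,
      show M + (j + 2) - (M + 1) = j + 1 by omega, show M + (j + 2) - (M + 2) = j by omega,
      apply_of_lt hrec (n := j + 2) (by omega) (by omega),
      apply_of_lt hrec (n := j + 1) (by omega) (by omega),
      apply_of_lt hrec (n := j) (by omega) (by omega), ih (by omega)] at h
    push_cast at h ⊢
    linear_combination h

end StabilityRecurrence

open Polynomial in
theorem stmt_15_general (M : ℕ) (hM : 3 ≤ M) (r : ℝ)
    (p : ℕ → ℝ)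
    (hconv : ∀ n : ℕ,
      (∑ j ∈ Finset.range (n + 1),
        ((1 + X - X ^ M * (X + (C (1 - r) + C r * X) ^ 2) : Polynomial ℝ).coeff j) *
          p (n - j))
        = (1 - X : Polynomial ℝ).coeff n) :
    ∀ n : ℕ, M + 2 ≤ n → n ≤ 2 * M - 1 →
      p n = 2 * (-1 : ℝ) ^ n +
        (-1 : ℝ) ^ (n + M) * (2 - 4 * r ^ 2 - 8 * r * (1 - r) * ((n : ℝ) - (M : ℝ))) := by
  have hg : (X + (C (1 - r) + C r * X) ^ 2 : ℝ[X])
      = C ((1 - r) ^ 2) + C (1 + 2 * r * (1 - r)) * X + C (r ^ 2) * X ^ 2 := by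
    simp only [map_pow, map_add, map_mul, map_sub, map_one, map_ofNat]
    ring
  simp only [hg] at hconv
  have hrec := recurrence_of_mul_mk_eq (coe_mul_mk_eq_of_sum_range_coeff_mul hconv)
  intro n hn hnM
  obtain ⟨k, rfl⟩ : ∃ k, n = M + k := ⟨n - M, by omega⟩
  have hsign : (-1 : ℝ) ^ (M + k + M) = (-1) ^ k := by
    rw [add_right_comm, ← two_mul, pow_add, pow_mul]
    norm_num
  rw [StabilityRecurrence.apply_add hrec (by omega) (by omega), hsign]
  push_cast
  ring

open Polynomial in
/-- For the `m = 1` B-spline scheme with step kernel: the stability coefficients `p_n`,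
defined by `P(ξ)(1 + ξ - ξ^M g(r,ξ)) = 1 - ξ` with `g(r,ξ) = ξ + (1-r+rξ)²`, satisfy for
`M+2 ≤ n ≤ 2M-1`:
`p_n = 2(-1)^n + (-1)^{n+M}(2 - 4r² - 8r(1-r)(n-M))`. -/
theorem stmt_15 (M : ℕ) (hM : 3 ≤ M) (r : ℝ) (hr0 : 0 ≤ r) (hr1 : r < 1)
    (p : ℕ → ℝ) (hp0 : p 0 = 1)
    (hconv : ∀ n : ℕ,
      (∑ j ∈ Finset.range (n + 1),
        ((1 + X - X ^ M * (X + (C (1 - r) + C r * X) ^ 2) : Polynomial ℝ).coeff j) *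
          p (n - j))
        = (1 - X : Polynomial ℝ).coeff n) :
    ∀ n : ℕ, M + 2 ≤ n → n ≤ 2 * M - 1 →
      p n = 2 * (-1 : ℝ) ^ n +
        (-1 : ℝ) ^ (n + M) * (2 - 4 * r ^ 2 - 8 * r * (1 - r) * ((n : ℝ) - (M : ℝ))) :=
  stmt_15_general M hM r p hconv
end

section
/- For the modified cubic convolution spline scheme with constant kernel K ≡ 1, the weights are q_0 = 5h/8, q_1 = 5h/6, q_2 = 25h/24, and q_j = h for all j ≥ 3. -/
/-!
The cubic B-spline `B` is supported in `[-2, 2]`, where it is a cubic on each unit interval; its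
integrals over `[-2,-1], [-1,0], [0,1], [1,2]` are `1/24, 11/24, 11/24, 1/24`. Substituting
`t = h x` gives `q_j = h ∫_0^∞ φ_j`, and since every `φ_j` is a combination of translates of `B`,
each `∫_0^∞ φ_j` is a combination of the tails `∫_c^∞ B`, `c = 1, 0, -1` and `c ≤ -2`, which
equal `1/24, 1/2, 23/24, 1`.
-/

open MeasureTheory Set

/-- The centred cubic B-spline `B(t) = b³(t+2)`, with support `(-2,2)`. -/
noncomputable def Bc (t : ℝ) : ℝ := bspline 3 (t + 2)

/-- The modified cubic spline basis functions with parabolic runout at `t = 0`. -/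
noncomputable def φmod : ℕ → ℝ → ℝ
  | 0, t => Bc t + 3 * Bc (t + 1)
  | 1, t => Bc (t - 1) - 3 * Bc (t + 1)
  | 2, t => Bc (t - 2) + Bc (t + 1)
  | (j + 3), t => Bc (t - ((j : ℝ) + 3))

section

variable {E : Type*} [NormedAddCommGroup E]

theorem IntervalIntegrable.of_eqOn_Ico {f g : ℝ → E} {a b : ℝ} (hab : a ≤ b) (hg : Continuous g)
    (h : EqOn f g (Ico a b)) : IntervalIntegrable f volume a b :=
  (hg.intervalIntegrable a b).congr_uIoo <| by
    rw [uIoo_of_le hab]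
    exact h.symm.mono Ioo_subset_Ico_self

variable [NormedSpace ℝ E]

theorem integral_Ioi_comp_add_right (g : ℝ → E) (a c : ℝ) :
    ∫ x in Ioi a, g (x + c) = ∫ x in Ioi (a + c), g x := by
  simpa using (measurePreserving_add_right volume c).setIntegral_preimage_emb
    (measurableEmbedding_addRight c) g (Ioi (a + c))

theorem integral_Ioi_comp_div (g : ℝ → E) (a : ℝ) {h : ℝ} (hh : 0 < h) :
    ∫ t in Ioi a, g (t / h) = h • ∫ x in Ioi (a / h), g x := by
  simpa [div_eq_mul_inv] using integral_comp_mul_right_Ioi g a (inv_pos.mpr hh)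

end

theorem bspline_succ (m : ℕ) (τ : ℝ) : bspline (m + 1) τ =
    τ / (m + 1) * bspline m τ + ((m : ℝ) + 2 - τ) / (m + 1) * bspline m (τ - 1) := rfl

theorem bspline_eq_zero_of_notMem (m : ℕ) {τ : ℝ} (h : τ ∉ Ico 0 ((m : ℝ) + 1)) :
    bspline m τ = 0 := by
  induction m generalizing τ with
  | zero => simpa [bspline] using h
  | succ m ih =>
    have h₀ : τ ∉ Ico 0 ((m : ℝ) + 1) := fun ⟨h₁, h₂⟩ => h ⟨h₁, by push_cast; linarith⟩
    have h₁ : τ - 1 ∉ Ico 0 ((m : ℝ) + 1) := fun ⟨h₁, h₂⟩ =>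
      h ⟨by linarith, by push_cast; linarith⟩
    rw [bspline_succ, ih h₀, ih h₁]
    ring

theorem Bc_eq_zero_of_notMem {t : ℝ} (h : t ∉ Ico (-2) 2) : Bc t = 0 :=
  bspline_eq_zero_of_notMem 3 fun ⟨h₁, h₂⟩ => h ⟨by linarith, by norm_num at h₂; linarith⟩

theorem Bc_of_mem_Ico_neg_two {t : ℝ} (ht : t ∈ Ico (-2) (-1)) : Bc t = (t + 2) ^ 3 / 6 := by
  obtain ⟨h₁, h₂⟩ := ht
  simp only [Bc, bspline]
  grind

theorem Bc_of_mem_Ico_neg_one {t : ℝ} (ht : t ∈ Ico (-1) 0) :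
    Bc t = 2 / 3 - t ^ 2 - t ^ 3 / 2 := by
  obtain ⟨h₁, h₂⟩ := ht
  simp only [Bc, bspline]
  grind

theorem Bc_of_mem_Ico_zero {t : ℝ} (ht : t ∈ Ico 0 1) : Bc t = 2 / 3 - t ^ 2 + t ^ 3 / 2 := by
  obtain ⟨h₁, h₂⟩ := ht
  simp only [Bc, bspline]
  grind

theorem Bc_of_mem_Ico_one {t : ℝ} (ht : t ∈ Ico 1 2) : Bc t = (2 - t) ^ 3 / 6 := by
  obtain ⟨h₁, h₂⟩ := ht
  simp only [Bc, bspline]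
  grind

theorem integral_Bc_neg_two_neg_one : ∫ x in (-2 : ℝ)..(-1), Bc x = 1 / 24 := by
  rw [intervalIntegral.integral_congr_Ioo_of_le (by norm_num)
    fun x hx => Bc_of_mem_Ico_neg_two (Ioo_subset_Ico_self hx)]
  norm_num [intervalIntegral.integral_comp_add_right (fun x => x ^ 3 / 6)]

theorem integral_Bc_neg_one_zero : ∫ x in (-1 : ℝ)..0, Bc x = 11 / 24 := by
  rw [intervalIntegral.integral_congr_Ioo_of_le (by norm_num)
    fun x hx => Bc_of_mem_Ico_neg_one (Ioo_subset_Ico_self hx)]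
  norm_num [intervalIntegral.integral_sub, intervalIntegral.integral_div]

theorem integral_Bc_zero_one : ∫ x in (0 : ℝ)..1, Bc x = 11 / 24 := by
  rw [intervalIntegral.integral_congr_Ioo_of_le (by norm_num)
    fun x hx => Bc_of_mem_Ico_zero (Ioo_subset_Ico_self hx)]
  norm_num [intervalIntegral.integral_add, intervalIntegral.integral_sub,
    intervalIntegral.integral_div]

theorem integral_Bc_one_two : ∫ x in (1 : ℝ)..2, Bc x = 1 / 24 := by
  rw [intervalIntegral.integral_congr_Ioo_of_le (by norm_num)
    fun x hx => Bc_of_mem_Ico_one (Ioo_subset_Ico_self hx)]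
  norm_num [intervalIntegral.integral_comp_sub_left (fun x => x ^ 3 / 6)]

theorem integrable_Bc : Integrable Bc := by
  have h₁ : IntervalIntegrable Bc volume (-2) (-1) :=
    .of_eqOn_Ico (by norm_num) (by fun_prop) fun _ => Bc_of_mem_Ico_neg_two
  have h₂ : IntervalIntegrable Bc volume (-1) 0 :=
    .of_eqOn_Ico (by norm_num) (by fun_prop) fun _ => Bc_of_mem_Ico_neg_one
  have h₃ : IntervalIntegrable Bc volume 0 1 :=
    .of_eqOn_Ico (by norm_num) (by fun_prop) fun _ => Bc_of_mem_Ico_zero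
  have h₄ : IntervalIntegrable Bc volume 1 2 :=
    .of_eqOn_Ico (by norm_num) (by fun_prop) fun _ => Bc_of_mem_Ico_one
  have h := ((h₁.trans h₂).trans h₃).trans h₄
  rw [intervalIntegrable_iff_integrableOn_Icc_of_le (by norm_num)] at h
  refine (integrableOn_iff_integrable_of_support_subset fun t ht => ?_).1 h
  by_contra hmem
  exact ht (Bc_eq_zero_of_notMem fun h => hmem (Ico_subset_Icc_self h))

theorem intervalIntegrable_Bc (a b : ℝ) : IntervalIntegrable Bc volume a b :=
  integrable_Bc.intervalIntegrable

theorem integral_Ioi_Bc_eq_intervalIntegral {c : ℝ} (hc : c ≤ 2) :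
    ∫ x in Ioi c, Bc x = ∫ x in c..2, Bc x := by
  rw [intervalIntegral.integral_of_le hc]
  exact setIntegral_eq_of_subset_of_forall_sdiff_eq_zero measurableSet_Ioi Ioc_subset_Ioi_self
    fun x ⟨hx, hx'⟩ => Bc_eq_zero_of_notMem fun h => hx' ⟨hx, h.2.le⟩

theorem integral_Ioi_one_Bc : ∫ x in Ioi 1, Bc x = 1 / 24 := by
  rw [integral_Ioi_Bc_eq_intervalIntegral (by norm_num), integral_Bc_one_two]

theorem integral_Ioi_zero_Bc : ∫ x in Ioi 0, Bc x = 1 / 2 := by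
  rw [integral_Ioi_Bc_eq_intervalIntegral (by norm_num),
    ← intervalIntegral.integral_add_adjacent_intervals (intervalIntegrable_Bc 0 1)
      (intervalIntegrable_Bc 1 2), integral_Bc_zero_one, integral_Bc_one_two]
  norm_num

theorem integral_Ioi_neg_one_Bc : ∫ x in Ioi (-1), Bc x = 23 / 24 := by
  rw [integral_Ioi_Bc_eq_intervalIntegral (by norm_num),
    ← intervalIntegral.integral_add_adjacent_intervals (intervalIntegrable_Bc (-1) 0)
      (intervalIntegrable_Bc 0 2), ← integral_Ioi_Bc_eq_intervalIntegral (by norm_num),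
    integral_Bc_neg_one_zero, integral_Ioi_zero_Bc]
  norm_num

theorem integral_Ioi_Bc_of_le_neg_two {c : ℝ} (hc : c ≤ -2) : ∫ x in Ioi c, Bc x = 1 := by
  have hleft : ∫ x in c..(-2), Bc x = 0 := by
    rw [intervalIntegral.integral_congr_Ioo_of_le hc
      fun x hx => Bc_eq_zero_of_notMem fun h => (hx.2.trans_le h.1).false]
    simp
  rw [integral_Ioi_Bc_eq_intervalIntegral (by linarith),
    ← intervalIntegral.integral_add_adjacent_intervals (intervalIntegrable_Bc c (-2))
      (intervalIntegrable_Bc (-2) 2),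
    ← intervalIntegral.integral_add_adjacent_intervals (intervalIntegrable_Bc (-2) (-1))
      (intervalIntegrable_Bc (-1) 2), ← integral_Ioi_Bc_eq_intervalIntegral (by norm_num),
    hleft, integral_Bc_neg_two_neg_one, integral_Ioi_neg_one_Bc]
  norm_num

theorem integral_Ioi_zero_Bc_comp_add_right (c : ℝ) :
    ∫ x in Ioi 0, Bc (x + c) = ∫ x in Ioi c, Bc x := by
  rw [integral_Ioi_comp_add_right, zero_add]

theorem integral_Ioi_zero_Bc_comp_sub_right (c : ℝ) :
    ∫ x in Ioi 0, Bc (x - c) = ∫ x in Ioi (-c), Bc x := by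
  simp only [sub_eq_add_neg, integral_Ioi_zero_Bc_comp_add_right]

theorem integral_φmod_zero : ∫ x in Ioi 0, φmod 0 x = 5 / 8 := by
  simp only [φmod]
  rw [integral_add integrable_Bc.integrableOn
      ((integrable_Bc.comp_add_right 1).integrableOn.const_mul 3),
    integral_const_mul, integral_Ioi_zero_Bc_comp_add_right, integral_Ioi_zero_Bc,
    integral_Ioi_one_Bc]
  norm_num

theorem integral_φmod_one : ∫ x in Ioi 0, φmod 1 x = 5 / 6 := by
  simp only [φmod]
  rw [integral_sub (integrable_Bc.comp_sub_right 1).integrableOn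
      ((integrable_Bc.comp_add_right 1).integrableOn.const_mul 3),
    integral_const_mul, integral_Ioi_zero_Bc_comp_sub_right, integral_Ioi_zero_Bc_comp_add_right,
    integral_Ioi_neg_one_Bc, integral_Ioi_one_Bc]
  norm_num

theorem integral_φmod_two : ∫ x in Ioi 0, φmod 2 x = 25 / 24 := by
  simp only [φmod]
  rw [integral_add (integrable_Bc.comp_sub_right 2).integrableOn
      (integrable_Bc.comp_add_right 1).integrableOn,
    integral_Ioi_zero_Bc_comp_sub_right, integral_Ioi_zero_Bc_comp_add_right,
    integral_Ioi_Bc_of_le_neg_two le_rfl, integral_Ioi_one_Bc]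
  norm_num

theorem integral_φmod_add_three (j : ℕ) : ∫ x in Ioi 0, φmod (j + 3) x = 1 := by
  simp only [φmod]
  rw [integral_Ioi_zero_Bc_comp_sub_right,
    integral_Ioi_Bc_of_le_neg_two (by linarith [j.cast_nonneg (α := ℝ)])]

/-- For the modified cubic convolution spline scheme with constant kernel `K ≡ 1`, the weights
`q_j = ∫_0^∞ φ_j(t/h) dt` are `q_0 = 5h/8`, `q_1 = 5h/6`, `q_2 = 25h/24`, and `q_j = h` for
`j ≥ 3`. -/
theorem stmt_17 (h : ℝ) (hh : 0 < h) (q : ℕ → ℝ)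
    (hq : ∀ j : ℕ, q j = ∫ t in Set.Ioi (0 : ℝ), φmod j (t / h)) :
    q 0 = 5 * h / 8 ∧ q 1 = 5 * h / 6 ∧ q 2 = 25 * h / 24 ∧ ∀ j : ℕ, 3 ≤ j → q j = h := by
  have hq' (j : ℕ) : q j = h * ∫ x in Ioi 0, φmod j x := by
    rw [hq, integral_Ioi_comp_div _ 0 hh, zero_div, smul_eq_mul]
  refine ⟨?_, ?_, ?_, fun j hj => ?_⟩
  · rw [hq', integral_φmod_zero]; ring
  · rw [hq', integral_φmod_one]; ring
  · rw [hq', integral_φmod_two]; ring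
  · obtain ⟨k, rfl⟩ := Nat.exists_eq_add_of_le' hj
    rw [hq', integral_φmod_add_three, mul_one]
end

section
/- Let (p_n) satisfy p_0 = 1, p_1 = -4/3, and suppose |p_n| ≤ (11/15) Γ_{n-1} + (8/5) Γ_{n-(M-1)} for all n ≥ 2, where Γ_k = max_{0 ≤ j ≤ k} |p_j| (and Γ_k = Γ_0 for k < 0, with M ≥ 5 an integer). Then Γ_n ≤ 6 Γ_{n-(M-1)} for all n ≥ M-1, and consequently |p_n| ≤ (4/3) · 6^{⌈n/(M-1)⌉} for all n ≥ 0. -/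
/-!
Since `Γ` is monotone, `Γ_n = max (Γ_{n-1}, |p_n|)`. If inductively `Γ_{n-1} ≤ 6 Γ_{n-M} ≤ 6 Γ_{n-(M-1)}`,
the recursion gives `|p_n| ≤ (11/15 · 6 + 8/5) Γ_{n-(M-1)} = 6 Γ_{n-(M-1)}`, which closes the induction.
Iterating `Γ_n ≤ 6 Γ_{n-(M-1)}` exactly `⌈n/(M-1)⌉` times reaches `Γ_0 = 1`.
-/

/-- Running maximum `Γ_k = max_{0 ≤ j ≤ k} |p_j|`. -/
noncomputable def runmax (p : ℕ → ℝ) (k : ℕ) : ℝ :=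
  (Finset.range (k + 1)).sup' ⟨0, Finset.mem_range.mpr (Nat.succ_pos k)⟩ fun j => |p j|

theorem Nat.sub_add_pred_div_add_one {n d : ℕ} (hn : 0 < n) (hd : 0 < d) :
    (n - d + (d - 1)) / d + 1 = (n + (d - 1)) / d := by
  rcases le_or_gt d n with hdn | hnd
  · rw [← Nat.add_div_right _ hd]
    congr 1
    omega
  · rw [Nat.sub_eq_zero_of_le hnd.le, zero_add, Nat.div_eq_of_lt (by omega), eq_comm,
      Nat.div_eq_iff hd]
    omega

section runmax

variable (p : ℕ → ℝ)

theorem le_runmax {j k : ℕ} (h : j ≤ k) : |p j| ≤ runmax p k :=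
  Finset.le_sup' (fun j => |p j|) (Finset.mem_range.2 (Nat.lt_succ_of_le h))

theorem runmax_le_iff {k : ℕ} {x : ℝ} : runmax p k ≤ x ↔ ∀ j ≤ k, |p j| ≤ x := by
  refine (Finset.sup'_le_iff _ _).trans ?_
  simp only [Finset.mem_range, Nat.lt_succ_iff]

theorem runmax_mono : Monotone (runmax p) := fun _ _ h =>
  (runmax_le_iff p).2 fun _ hj => le_runmax p (hj.trans h)

theorem runmax_nonneg (k : ℕ) : 0 ≤ runmax p k :=
  (abs_nonneg _).trans (le_runmax p k.zero_le)

theorem runmax_zero : runmax p 0 = |p 0| := by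
  simp [runmax]

theorem runmax_succ (k : ℕ) : runmax p (k + 1) = max (runmax p k) |p (k + 1)| := by
  refine le_antisymm ((runmax_le_iff p).2 fun j hj => ?_)
    (max_le (runmax_mono p k.le_succ) (le_runmax p le_rfl))
  rcases Nat.lt_or_ge j (k + 1) with hjk | hjk
  · exact (le_runmax p (Nat.lt_succ_iff.1 hjk)).trans (le_max_left _ _)
  · obtain rfl : j = k + 1 := le_antisymm hj hjk
    exact le_max_right _ _

theorem runmax_le_mul_runmax_sub {d : ℕ} {a b C : ℝ} (hd : 0 < d) (ha : 0 ≤ a) (hC : 0 ≤ C)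
    (habC : a * C + b ≤ C) (hbase : runmax p 1 ≤ C * runmax p 0)
    (hrec : ∀ n, 2 ≤ n → |p n| ≤ a * runmax p (n - 1) + b * runmax p (n - d)) (n : ℕ) :
    runmax p n ≤ C * runmax p (n - d) := by
  induction n with
  | zero => simpa using (runmax_mono p zero_le_one).trans hbase
  | succ k ih =>
    rcases Nat.eq_zero_or_pos k with rfl | hk
    · rwa [Nat.sub_eq_zero_of_le hd]
    have hshift : runmax p (k - d) ≤ runmax p (k + 1 - d) := runmax_mono p (by omega)
    have hG := runmax_nonneg p (k + 1 - d)
    have hprev : runmax p k ≤ C * runmax p (k + 1 - d) :=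
      ih.trans (mul_le_mul_of_nonneg_left hshift hC)
    have hnew : |p (k + 1)| ≤ C * runmax p (k + 1 - d) :=
      calc |p (k + 1)| ≤ a * runmax p k + b * runmax p (k + 1 - d) := hrec (k + 1) (by omega)
        _ ≤ a * (C * runmax p (k + 1 - d)) + b * runmax p (k + 1 - d) := by gcongr
        _ = (a * C + b) * runmax p (k + 1 - d) := by ring
        _ ≤ C * runmax p (k + 1 - d) := by gcongr
    rw [runmax_succ]
    exact max_le hprev hnew

theorem runmax_le_pow_mul_runmax_zero {d : ℕ} {C : ℝ} (hd : 0 < d) (hC : 0 ≤ C)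
    (hstep : ∀ n, runmax p n ≤ C * runmax p (n - d)) (n : ℕ) :
    runmax p n ≤ C ^ ((n + (d - 1)) / d) * runmax p 0 := by
  induction n using Nat.strong_induction_on with
  | _ n ih =>
    rcases Nat.eq_zero_or_pos n with rfl | hn
    · rw [zero_add, Nat.div_eq_of_lt (by omega), pow_zero, one_mul]
    calc runmax p n ≤ C * runmax p (n - d) := hstep n
      _ ≤ C * (C ^ ((n - d + (d - 1)) / d) * runmax p 0) := by gcongr; exact ih _ (by omega)
      _ = C ^ ((n - d + (d - 1)) / d + 1) * runmax p 0 := by ring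
      _ = C ^ ((n + (d - 1)) / d) * runmax p 0 := by rw [Nat.sub_add_pred_div_add_one hn hd]

end runmax

/-- The recursive-maximum stability argument for the modified cubic scheme with the step
kernel: if `p_0 = 1`, `p_1 = -4/3` and `|p_n| ≤ (11/15)Γ_{n-1} + (8/5)Γ_{n-(M-1)}` for
`n ≥ 2`, then `Γ_n ≤ 6 Γ_{n-(M-1)}` for `n ≥ M-1` and `|p_n| ≤ (4/3)·6^{⌈n/(M-1)⌉}`. -/
theorem stmt_18 (M : ℕ) (hM : 5 ≤ M) (p : ℕ → ℝ)
    (hp0 : p 0 = 1) (hp1 : p 1 = -4 / 3)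
    (hrec : ∀ n : ℕ, 2 ≤ n →
      |p n| ≤ 11 / 15 * runmax p (n - 1) + 8 / 5 * runmax p (n - (M - 1))) :
    (∀ n : ℕ, M - 1 ≤ n → runmax p n ≤ 6 * runmax p (n - (M - 1))) ∧
    (∀ n : ℕ, |p n| ≤ 4 / 3 * (6 : ℝ) ^ ((n + (M - 2)) / (M - 1))) := by
  have hd : 0 < M - 1 := by omega
  have hΓ0 : runmax p 0 = 1 := by rw [runmax_zero, hp0, abs_one]
  have hΓ1 : runmax p 1 = 4 / 3 := by
    rw [runmax_succ, hΓ0, hp1]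
    norm_num [abs_of_neg]
  have hstep := runmax_le_mul_runmax_sub p (C := 6) hd (by norm_num) (by norm_num) (by norm_num)
    (by rw [hΓ0, hΓ1]; norm_num) hrec
  refine ⟨fun n _ => hstep n, fun n => ?_⟩
  have hexp : M - 2 = M - 1 - 1 := by omega
  calc |p n| ≤ runmax p n := le_runmax p le_rfl
    _ ≤ (6 : ℝ) ^ ((n + (M - 2)) / (M - 1)) * runmax p 0 := by
      rw [hexp]; exact runmax_le_pow_mul_runmax_zero p hd (by norm_num) hstep n
    _ ≤ 4 / 3 * (6 : ℝ) ^ ((n + (M - 2)) / (M - 1)) := by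
      rw [hΓ0, mul_one]
      exact le_mul_of_one_le_left (by positivity) (by norm_num)
end
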